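/- arXiv:1412.6937 — 2 statements merged into one kernel-verified Lean document; each statement's English description precedes it below -/
import Mathlib

section
/- Suppose G is connected and each f_ij belongs to 𝒰. Then the set of equilibria of the formation control system whose centroid is at the origin, {p ∈ P_G : F(p) = 0 and Σ_{i=1}^N x_i = 0}, is a compact subset of P_G; in particular it is bounded and bounded away from the collision set {p : x_i = x_j for some edge (i,j)}. -/
open scoped BigOperators
open scoped Classical

noncomputable section

abbrev Plane : Type := EuclideanSpace ℝ (Fin 2)

abbrev Config (ι : Type) : Type := PiLp 2 (fun _ : ι => Plane)

def ConfigSpace {N : ℕ} (G : SimpleGraph (Fin N)) : Set (Config (Fin N)) :=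
  {p | ∀ i j : Fin N, G.Adj i j → p i ≠ p j}

noncomputable def formationField {ι : Type} [Fintype ι] (Adj : ι → ι → Prop)
    (f : ι → ι → ℝ → ℝ) (q : Config ι) : Config ι :=
  WithLp.toLp 2 (fun v => ∑ u, if Adj v u then f v u ‖q v - q u‖ • (q u - q v) else 0)

noncomputable def potential {N : ℕ} (G : SimpleGraph (Fin N)) (f : Fin N → Fin N → ℝ → ℝ)
    (p : Config (Fin N)) : ℝ :=
  ∑ i, ∑ j, if G.Adj i j ∧ i < j then ∫ t in (1:ℝ)..(‖p i - p j‖), t * f i j t else 0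

def MemU (f : ℝ → ℝ) : Prop :=
  ContDiffOn ℝ 1 f (Set.Ioi 0) ∧
  (∀ x : ℝ, 0 < x → 0 < deriv (fun t => t * f t) x) ∧
  (∃! d : ℝ, 0 < d ∧ f d = 0) ∧
  Filter.Tendsto (fun x : ℝ => ∫ t in x..(1:ℝ), t * f t) (nhdsWithin 0 (Set.Ioi 0)) Filter.atBot

def SO2 (θ : Matrix (Fin 2) (Fin 2) ℝ) : Prop :=
  θ ∈ Matrix.orthogonalGroup (Fin 2) ℝ ∧ θ.det = 1

noncomputable def rotAct {ι : Type} (θ : Matrix (Fin 2) (Fin 2) ℝ) (v : Plane) (p : Config ι) :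
    Config ι :=
  WithLp.toLp 2 (fun i => Matrix.toEuclideanLin θ (p i) + v)

def orbitSE2 {ι : Type} (p : Config ι) : Set (Config ι) :=
  {q | ∃ θ : Matrix (Fin 2) (Fin 2) ℝ, SO2 θ ∧ ∃ v : Plane, q = rotAct θ v p}

noncomputable def basisVec {ι : Type} [DecidableEq ι] (i : ι) (a : Fin 2) : Config ι :=
  WithLp.toLp 2 (Pi.single i (EuclideanSpace.single a (1:ℝ)))

noncomputable def hessMat {ι : Type} [Fintype ι] [DecidableEq ι] (Φ : Config ι → ℝ)
    (p : Config ι) : Matrix (ι × Fin 2) (ι × Fin 2) ℝ :=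
  Matrix.of fun q r => fderiv ℝ (fun x => fderiv ℝ Φ x (basisVec q.1 q.2)) p (basisVec r.1 r.2)

noncomputable def jacMat {ι : Type} [Fintype ι] [DecidableEq ι] (F : Config ι → Config ι)
    (p : Config ι) : Matrix (ι × Fin 2) (ι × Fin 2) ℝ :=
  Matrix.of fun q r => fderiv ℝ (fun x => F x q.1 q.2) p (basisVec r.1 r.2)

noncomputable def posIndex {n : Type} [Fintype n] [DecidableEq n] (A : Matrix n n ℝ) : ℕ :=
  Multiset.card (A.charpoly.roots.filter fun x => 0 < x)

noncomputable def negIndex {n : Type} [Fintype n] [DecidableEq n] (A : Matrix n n ℝ) : ℕ :=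
  Multiset.card (A.charpoly.roots.filter fun x => x < 0)

noncomputable def nullIndex {n : Type} [Fintype n] [DecidableEq n] (A : Matrix n n ℝ) : ℕ :=
  Multiset.card (A.charpoly.roots.filter fun x => x = 0)

inductive IsTriangulatedLaman : {N : ℕ} → SimpleGraph (Fin N) → Prop
  | base : IsTriangulatedLaman (⊤ : SimpleGraph (Fin 2))
  | grow {N : ℕ} (G' : SimpleGraph (Fin (N + 2))) (G : SimpleGraph (Fin (N + 3)))
      (j k : Fin (N + 2)) :
      IsTriangulatedLaman G' → G'.Adj j k →
      (∀ a b : Fin (N + 2), G.Adj a.castSucc b.castSucc ↔ G'.Adj a b) →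
      (∀ a : Fin (N + 2), G.Adj a.castSucc (Fin.last (N + 2)) ↔ a = j ∨ a = k) →
      IsTriangulatedLaman G

def StronglyRigid {N : ℕ} (G : SimpleGraph (Fin N)) (p : Config (Fin N)) : Prop :=
  ∀ i j k : Fin N, G.Adj i j → G.Adj i k → G.Adj j k →
    ¬ Collinear ℝ ({p i, p j, p k} : Set Plane)

def TriangleInequalities {N : ℕ} (G : SimpleGraph (Fin N)) (d : Fin N → Fin N → ℝ) : Prop :=
  ∀ i j k : Fin N, G.Adj i j → G.Adj i k → G.Adj j k → d j k < d i j + d i k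

def vertexSet {N : ℕ} (B : Finset (Sym2 (Fin N))) : Finset (Fin N) :=
  Finset.univ.filter fun v => ∃ e ∈ B, v ∈ e

def inducedSubgraph {N : ℕ} (B : Finset (Sym2 (Fin N))) : SimpleGraph ↥(vertexSet B) :=
  SimpleGraph.fromEdgeSet {e | Sym2.map Subtype.val e ∈ B}

def InducedTLaman {N : ℕ} (B : Finset (Sym2 (Fin N))) : Prop :=
  ∃ (M : ℕ) (H : SimpleGraph (Fin M)), IsTriangulatedLaman H ∧ Nonempty (inducedSubgraph B ≃g H)

def IsLineLamanPart {N : ℕ} (p : Config (Fin N)) (B : Finset (Sym2 (Fin N))) : Prop :=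
  InducedTLaman B ∧ Collinear ℝ (p '' (vertexSet B : Set (Fin N)))

def IsLineLamanPartition {N : ℕ} (G : SimpleGraph (Fin N)) (p : Config (Fin N))
    (P : Finset (Finset (Sym2 (Fin N)))) : Prop :=
  (∀ B ∈ P, B.Nonempty ∧ (B : Set (Sym2 (Fin N))) ⊆ G.edgeSet ∧ IsLineLamanPart p B) ∧
  ∀ e ∈ G.edgeSet, ∃! B, B ∈ P ∧ e ∈ B

def Refines {N : ℕ} (Q P : Finset (Finset (Sym2 (Fin N)))) : Prop :=
  ∀ B ∈ Q, ∃ C ∈ P, B ⊆ C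

def IsIndependentPartition {N : ℕ} (G : SimpleGraph (Fin N)) (p : Config (Fin N))
    (P : Finset (Finset (Sym2 (Fin N)))) : Prop :=
  IsLineLamanPartition G p P ∧ ∀ Q, IsLineLamanPartition G p Q → Refines Q P

def subConfig {N : ℕ} (p : Config (Fin N)) (B : Finset (Sym2 (Fin N))) :
    Config ↥(vertexSet B) :=
  WithLp.toLp 2 (fun v => p v.1)

noncomputable def subField {N : ℕ} (f : Fin N → Fin N → ℝ → ℝ) (B : Finset (Sym2 (Fin N))) :
    Config ↥(vertexSet B) → Config ↥(vertexSet B) :=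
  formationField (fun u v => s(u.1, v.1) ∈ B) (fun u v => f u.1 v.1)

def IsEquivariantMorse {N : ℕ} (G : SimpleGraph (Fin N)) (f : Fin N → Fin N → ℝ → ℝ) : Prop :=
  (∃ S : Finset (Config (Fin N)),
      {p | p ∈ ConfigSpace G ∧ formationField G.Adj f p = 0} = ⋃ q ∈ S, orbitSE2 q) ∧
  ∀ p, p ∈ ConfigSpace G → formationField G.Adj f p = 0 →
    nullIndex (jacMat (formationField G.Adj f) p) = 3

noncomputable def distMap {N : ℕ} (G : SimpleGraph (Fin N)) (p : Config (Fin N)) :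
    ↥G.edgeFinset → ℝ :=
  fun e => Sym2.lift ⟨fun i j => ‖p i - p j‖ ^ 2, fun i j => by dsimp only; rw [norm_sub_rev]⟩ e.1

open Filter MeasureTheory

open scoped RealInnerProductSpace
open Set Bornology Topology

/-!
At an equilibrium, write `r_ij = ‖x_i - x_j‖` and `w_ij = r_ij f_ij(r_ij)`. The forces across
any cut of the vertex set cancel, and pairing the field with the configuration itself gives the
virial identity `∑ w_ij r_ij = 0`. Cutting by a hyperplane perpendicular to an edge bounds every
tension `w_ij` from below by a fixed multiple of the largest tension `B`; the virial identity then
makes the edge carrying `B` short, and since `t f(t)` is increasing this bounds `B` independently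
of the equilibrium. Once all tensions lie in a fixed interval, (C2) keeps the edge lengths away
from `0`, the virial identity bounds them from above, and connectivity together with the centroid
condition bounds the whole configuration. The field is continuous on the region where edge
lengths are at least `ε`, so the equilibria form a closed bounded set.
-/

theorem Finset.neg_card_mul_le_of_sum_eq_zero {α : Type*} {s : Finset α} {a : α → ℝ} {K : ℝ}
    (hs : ∑ i ∈ s, a i = 0) (hK : ∀ i ∈ s, a i ≤ K) {i : α} (hi : i ∈ s) :
    -(s.card * K) ≤ a i := by
  have hsum : ∑ j ∈ s, (K - a j) = s.card * K := by
    rw [Finset.sum_sub_distrib, hs, Finset.sum_const, nsmul_eq_mul, sub_zero]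
  have hle : K - a i ≤ s.card * K :=
    hsum ▸ Finset.single_le_sum (fun j hj => sub_nonneg.2 (hK j hj)) hi
  have hcard : (1 : ℝ) ≤ s.card := by exact_mod_cast Finset.card_pos.2 ⟨i, hi⟩
  nlinarith [hK i hi]

theorem Finset.sum_sum_eq_zero_of_antisymm {ι M : Type*} [AddCommGroup M] [Module ℝ M]
    (s : Finset ι) {a : ι → ι → M} (ha : ∀ i j, a j i = -a i j) :
    ∑ i ∈ s, ∑ j ∈ s, a i j = 0 := by
  have hT : ∑ i ∈ s, ∑ j ∈ s, a i j = -∑ i ∈ s, ∑ j ∈ s, a i j := by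
    rw [← Finset.sum_neg_distrib, Finset.sum_comm]
    exact Finset.sum_congr rfl fun i _ => by
      rw [← Finset.sum_neg_distrib]; exact Finset.sum_congr rfl fun j _ => ha i j
  have h2 : (2 : ℝ) • ∑ i ∈ s, ∑ j ∈ s, a i j = 0 := by
    rw [two_smul]; nth_rw 2 [hT]; exact add_neg_cancel _
  exact (smul_eq_zero.1 h2).resolve_left two_ne_zero

section Balance

variable {ι : Type*} [Fintype ι] {c : ι → ι → ℝ}

theorem sum_sum_compl_smul_sub_eq_zero {M : Type*} [AddCommGroup M] [Module ℝ M] {x : ι → M}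
    (hc : ∀ i j, c i j = c j i) (hx : ∀ i, ∑ j, c i j • (x j - x i) = 0) (S : Finset ι) :
    ∑ i ∈ S, ∑ j ∈ Sᶜ, c i j • (x j - x i) = 0 := by
  have hS : ∑ i ∈ S, ∑ j ∈ S, c i j • (x j - x i) = 0 :=
    Finset.sum_sum_eq_zero_of_antisymm S fun i j => by rw [hc, ← smul_neg, neg_sub]
  have hall : ∑ i ∈ S, ∑ j, c i j • (x j - x i) = 0 := Finset.sum_eq_zero fun i _ => hx i
  simpa only [← Finset.sum_add_sum_compl S, Finset.sum_add_distrib, hS, zero_add] using hall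

variable {E : Type*} [NormedAddCommGroup E] [InnerProductSpace ℝ E] {x : ι → E}

theorem sum_sum_mul_norm_sub_sq_eq_zero (hc : ∀ i j, c i j = c j i)
    (hx : ∀ i, ∑ j, c i j • (x j - x i) = 0) :
    ∑ i, ∑ j, c i j * ‖x i - x j‖ ^ 2 = 0 := by
  have hpt : ∀ i j, c i j * ‖x i - x j‖ ^ 2 =
      c i j * (‖x j‖ ^ 2 - ‖x i‖ ^ 2) - 2 * (c i j * ⟪x j - x i, x i⟫) := by
    intro i j
    rw [norm_sub_sq_real, inner_sub_left, real_inner_self_eq_norm_sq, real_inner_comm]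
    ring
  have hanti : ∑ i, ∑ j, c i j * (‖x j‖ ^ 2 - ‖x i‖ ^ 2) = 0 :=
    Finset.sum_sum_eq_zero_of_antisymm _ fun i j => by rw [hc]; ring
  have hbal : ∑ i, ∑ j, c i j * ⟪x j - x i, x i⟫ = 0 := Finset.sum_eq_zero fun i _ => by
    simp_rw [← real_inner_smul_left, ← sum_inner, hx i, inner_zero_left]
  simp only [hpt, Finset.sum_sub_distrib, ← Finset.mul_sum, hanti, hbal]
  ring

theorem neg_card_mul_le_mul_norm_sub (hc : ∀ i j, c i j = c j i)
    (hx : ∀ i, ∑ j, c i j • (x j - x i) = 0) {B : ℝ} (hB : ∀ i j, c i j * ‖x i - x j‖ ≤ B)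
    (a b : ι) : -(Fintype.card (ι × ι) * B) ≤ c a b * ‖x a - x b‖ := by
  have hB0 : 0 ≤ B := by simpa using hB a a
  rcases eq_or_ne (x a) (x b) with hab | hab
  · rw [hab, sub_self, norm_zero, mul_zero, neg_nonpos]
    positivity
  set v := x b - x a
  have hv : 0 < ‖v‖ := norm_pos_iff.2 (sub_ne_zero.2 hab.symm)
  set S := Finset.univ.filter fun i => ⟪x i, v⟫ < ⟪x b, v⟫
  have hsum : ∑ q ∈ S ×ˢ Sᶜ, c q.1 q.2 * ⟪x q.2 - x q.1, v⟫ = 0 := by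
    simp_rw [Finset.sum_product, ← real_inner_smul_left, ← sum_inner,
      sum_sum_compl_smul_sub_eq_zero hc hx S, inner_zero_left]
  -- every edge crossing the cut contributes at most `B ‖v‖`, the edge `ab` contributes `c_ab ‖v‖²`
  have hterm : ∀ q ∈ S ×ˢ Sᶜ, c q.1 q.2 * ⟪x q.2 - x q.1, v⟫ ≤ B * ‖v‖ := by
    rintro ⟨i, j⟩ hq
    simp only [S, Finset.mem_product, Finset.mem_compl, Finset.mem_filter, Finset.mem_univ,
      true_and, not_lt] at hq
    have hpos : 0 < ⟪x j - x i, v⟫ := by rw [inner_sub_left]; linarith [hq.1, hq.2]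
    rcases le_or_gt (c i j) 0 with hc0 | hc0
    · exact (mul_nonpos_of_nonpos_of_nonneg hc0 hpos.le).trans (by positivity)
    · calc c i j * ⟪x j - x i, v⟫ ≤ c i j * (‖x i - x j‖ * ‖v‖) := by
            rw [norm_sub_rev]; gcongr; exact real_inner_le_norm _ _
        _ ≤ B * ‖v‖ := by rw [← mul_assoc]; gcongr; exact hB i j
  have hab' : (a, b) ∈ S ×ˢ Sᶜ := by
    have : 0 < ⟪x b, v⟫ - ⟪x a, v⟫ := by
      rw [← inner_sub_left, real_inner_self_eq_norm_sq]; positivity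
    simp only [S, Finset.mem_product, Finset.mem_compl, Finset.mem_filter, Finset.mem_univ,
      true_and, not_lt]
    exact ⟨by linarith, le_rfl⟩
  have key := Finset.neg_card_mul_le_of_sum_eq_zero hsum hterm hab'
  have hcard : ((S ×ˢ Sᶜ).card : ℝ) ≤ Fintype.card (ι × ι) := by
    exact_mod_cast Finset.card_le_univ _
  rw [real_inner_self_eq_norm_sq] at key
  rw [norm_sub_rev]
  refine le_of_mul_le_mul_right ?_ hv
  nlinarith [mul_nonneg hB0 hv.le]

theorem mul_norm_sub_sq_le (hc : ∀ i j, c i j = c j i) (hx : ∀ i, ∑ j, c i j • (x j - x i) = 0)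
    {K D : ℝ} (hK : ∀ i j, -K ≤ c i j * ‖x i - x j‖) (hD : ∀ i j, c i j < 0 → ‖x i - x j‖ ≤ D)
    (hD0 : 0 ≤ D) (a b : ι) :
    c a b * ‖x a - x b‖ ^ 2 ≤ Fintype.card (ι × ι) * (K * D) := by
  have hK0 : 0 ≤ K := by simpa using hK a a
  have hterm : ∀ q ∈ (Finset.univ : Finset (ι × ι)),
      -(c q.1 q.2 * ‖x q.1 - x q.2‖ ^ 2) ≤ K * D := by
    rintro ⟨i, j⟩ -
    rcases le_or_gt 0 (c i j) with h | h
    · have : 0 ≤ c i j * ‖x i - x j‖ ^ 2 := by positivity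
      nlinarith [mul_nonneg hK0 hD0]
    · calc -(c i j * ‖x i - x j‖ ^ 2) = -(c i j * ‖x i - x j‖) * ‖x i - x j‖ := by ring
        _ ≤ K * D := mul_le_mul (by linarith [hK i j]) (hD i j h) (norm_nonneg _) hK0
  have hsum : ∑ q : ι × ι, -(c q.1 q.2 * ‖x q.1 - x q.2‖ ^ 2) = 0 := by
    simp only [Fintype.sum_prod_type, Finset.sum_neg_distrib,
      sum_sum_mul_norm_sub_sq_eq_zero hc hx, neg_zero]
  have := Finset.neg_card_mul_le_of_sum_eq_zero hsum hterm (Finset.mem_univ (a, b))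
  rw [Finset.card_univ] at this
  linarith

theorem norm_sub_le_of_forall_mul_norm_sub_le (hc : ∀ i j, c i j = c j i)
    (hx : ∀ i, ∑ j, c i j • (x j - x i) = 0) {D : ℝ}
    (hD : ∀ i j, c i j < 0 → ‖x i - x j‖ ≤ D) (hD0 : 0 ≤ D) {a b : ι}
    (hmax : ∀ i j, c i j * ‖x i - x j‖ ≤ c a b * ‖x a - x b‖)
    (hpos : 0 < c a b * ‖x a - x b‖) :
    ‖x a - x b‖ ≤ Fintype.card (ι × ι) ^ 2 * D := by
  have hvir := mul_norm_sub_sq_le hc hx (neg_card_mul_le_mul_norm_sub hc hx hmax) hD hD0 a b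
  refine le_of_mul_le_mul_left ?_ hpos
  nlinarith

end Balance

section MemU

variable {g : ℝ → ℝ}

theorem MemU.strictMonoOn (hg : MemU g) : StrictMonoOn (fun t => t * g t) (Ioi 0) :=
  strictMonoOn_of_deriv_pos (convex_Ioi 0) (continuousOn_id.mul hg.1.continuousOn)
    fun t ht => hg.2.1 t (by rwa [interior_Ioi] at ht)

theorem MemU.exists_mul_lt (hg : MemU g) (C : ℝ) : ∃ t > 0, t * g t < C := by
  by_contra! h
  -- on `(0, 1)` the integral in (C2) would stay above `min C 0`
  have hbdd : ∀ᶠ s in 𝓝[>] 0, min C 0 ≤ ∫ t in s..1, t * g t := by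
    filter_upwards [Ioo_mem_nhdsGT one_pos] with s hs
    have hint : IntervalIntegrable (fun t => t * g t) volume s 1 :=
      ((continuousOn_id.mul hg.1.continuousOn).mono fun t ht =>
        hs.1.trans_le (uIcc_of_le hs.2.le ▸ ht).1).intervalIntegrable
    have hmono := intervalIntegral.integral_mono_on hs.2.le intervalIntegrable_const hint
      fun t ht => h t (hs.1.trans_le ht.1)
    rw [intervalIntegral.integral_const, smul_eq_mul] at hmono
    nlinarith [min_le_left C 0, min_le_right C 0, hs.1, hs.2]
  obtain ⟨s, hs, hs'⟩ := (hbdd.and (hg.2.2.2.eventually (eventually_lt_atBot (min C 0)))).exists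
  exact hs'.not_ge hs

theorem MemU.eventually_le_of_le_mul (hg : MemU g) (C : ℝ) :
    ∀ᶠ ε in 𝓝[>] 0, ∀ r > 0, C ≤ r * g r → ε ≤ r := by
  obtain ⟨t, ht, hlt⟩ := hg.exists_mul_lt C
  filter_upwards [Ioc_mem_nhdsGT ht] with ε hε r hr hC
  exact hε.2.trans ((hg.strictMonoOn.le_iff_le ht hr).1 (hlt.le.trans hC))

theorem MemU.eventually_le_of_mul_nonpos (hg : MemU g) :
    ∀ᶠ D in atTop, ∀ r > 0, r * g r ≤ 0 → r ≤ D := by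
  obtain ⟨d, ⟨hd, hgd⟩, -⟩ := hg.2.2.1
  filter_upwards [eventually_ge_atTop d] with D hD r hr h
  exact ((hg.strictMonoOn.le_iff_le hr hd).1 (by simpa [hgd] using h)).trans hD

theorem MemU.eventually_le_of_mul_mul_le (hg : MemU g) (A : ℝ) :
    ∀ᶠ M in atTop, ∀ r > 0, r * g r * r ≤ A → r ≤ M := by
  obtain ⟨d, ⟨hd, hgd⟩, -⟩ := hg.2.2.1
  have hd1 : d + 1 ∈ Ioi (0 : ℝ) := by rw [mem_Ioi]; linarith
  have hρ : 0 < (d + 1) * g (d + 1) := by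
    simpa [hgd] using hg.strictMonoOn hd hd1 (lt_add_one d)
  filter_upwards [eventually_ge_atTop (d + 1), eventually_ge_atTop (A / ((d + 1) * g (d + 1)))]
    with M hM₁ hM₂ r hr h
  by_contra! hrM
  have hmono := (hg.strictMonoOn.le_iff_le hd1 hr).2 (hM₁.trans hrM.le)
  have : r ≤ A / ((d + 1) * g (d + 1)) := (le_div_iff₀ hρ).2 (by nlinarith)
  linarith

end MemU

theorem SimpleGraph.eventually_forall_adj {V α : Type*} [Finite V] {G : SimpleGraph V}
    {l : Filter α} {P : V → V → α → Prop} (h : ∀ i j, G.Adj i j → ∀ᶠ a in l, P i j a) :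
    ∀ᶠ a in l, ∀ i j, G.Adj i j → P i j a :=
  eventually_all.2 fun i => eventually_all.2 fun j => eventually_imp_distrib_left.2 (h i j)

def edgeTension {V E : Type*} [SeminormedAddCommGroup E] (G : SimpleGraph V)
    (f : V → V → ℝ → ℝ) (x : V → E) (i j : V) : ℝ :=
  if G.Adj i j then f i j ‖x i - x j‖ else 0

theorem edgeTension_comm {V E : Type*} [SeminormedAddCommGroup E] {G : SimpleGraph V}
    {f : V → V → ℝ → ℝ} (hsym : ∀ i j, f i j = f j i) (x : V → E) (i j : V) :
    edgeTension G f x i j = edgeTension G f x j i := by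
  simp only [edgeTension, G.adj_comm, norm_sub_rev (x i), hsym i j]

theorem formationField_eq_zero_iff {V : Type} [Fintype V] {G : SimpleGraph V}
    {f : V → V → ℝ → ℝ} {p : Config V} :
    formationField G.Adj f p = 0 ↔ ∀ i, ∑ j, edgeTension G f p.ofLp i j • (p j - p i) = 0 := by
  simp only [formationField, edgeTension, ite_smul, zero_smul, WithLp.toLp_eq_zero, funext_iff,
    Pi.zero_apply]

theorem exists_forall_norm_sub_le_of_edgeTension_neg {V E : Type*} [Finite V]
    [SeminormedAddCommGroup E] {G : SimpleGraph V} {f : V → V → ℝ → ℝ}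
    (hU : ∀ i j, G.Adj i j → MemU (f i j)) :
    ∃ D, 0 ≤ D ∧ ∀ (x : V → E) i j, edgeTension G f x i j < 0 → ‖x i - x j‖ ≤ D := by
  obtain ⟨D, hD0, hD⟩ := ((eventually_ge_atTop 0).and
    (G.eventually_forall_adj fun i j hij => (hU i j hij).eventually_le_of_mul_nonpos)).exists
  refine ⟨D, hD0, fun x i j hneg => ?_⟩
  have hij : G.Adj i j := by by_contra h; simp [edgeTension, h] at hneg
  rw [edgeTension, if_pos hij] at hneg
  rcases (norm_nonneg (x i - x j)).eq_or_lt with h | h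
  · exact h ▸ hD0
  · exact hD i j hij _ h (mul_nonpos_of_nonneg_of_nonpos h.le hneg.le)

section Formation

variable {V : Type*} [Fintype V] {G : SimpleGraph V} {f : V → V → ℝ → ℝ}
  {E : Type*} [NormedAddCommGroup E] [InnerProductSpace ℝ E]

theorem exists_forall_edgeTension_mul_norm_sub_le (hsym : ∀ i j, f i j = f j i)
    (hU : ∀ i j, G.Adj i j → MemU (f i j)) :
    ∃ C, ∀ x : V → E, (∀ i j, G.Adj i j → x i ≠ x j) →
      (∀ i, ∑ j, edgeTension G f x i j • (x j - x i) = 0) →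
      ∀ i j, edgeTension G f x i j * ‖x i - x j‖ ≤ C := by
  obtain ⟨D, hD0, hD⟩ := exists_forall_norm_sub_le_of_edgeTension_neg (E := E) hU
  set R := (Fintype.card (V × V) : ℝ) ^ 2 * D
  obtain ⟨C, hC0, hC⟩ := ((eventually_ge_atTop 0).and
    (G.eventually_forall_adj fun i j _ => eventually_ge_atTop (R * f i j R))).exists
  refine ⟨C, fun x hinj hx i j => ?_⟩
  have : Nonempty (V × V) := ⟨(i, j)⟩
  obtain ⟨⟨a, b⟩, hmax⟩ :=
    Finite.exists_max fun q : V × V => edgeTension G f x q.1 q.2 * ‖x q.1 - x q.2‖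
  refine (hmax (i, j)).trans ?_
  rcases le_or_gt (edgeTension G f x a b * ‖x a - x b‖) 0 with hB | hB
  · exact hB.trans hC0
  have hab : G.Adj a b := by by_contra h; simp [edgeTension, h] at hB
  have hr : 0 < ‖x a - x b‖ := norm_pos_iff.2 (sub_ne_zero.2 (hinj a b hab))
  have hshort : ‖x a - x b‖ ≤ R := norm_sub_le_of_forall_mul_norm_sub_le
    (edgeTension_comm hsym x) hx (hD x) hD0 (fun i j => hmax (i, j)) hB
  calc edgeTension G f x a b * ‖x a - x b‖ = ‖x a - x b‖ * f a b ‖x a - x b‖ := by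
        rw [edgeTension, if_pos hab, mul_comm]
    _ ≤ R * f a b R := (hU a b hab).strictMonoOn.monotoneOn hr (hr.trans_le hshort) hshort
    _ ≤ C := hC a b hab

theorem exists_edge_length_bounds (hsym : ∀ i j, f i j = f j i)
    (hU : ∀ i j, G.Adj i j → MemU (f i j)) :
    ∃ ε > 0, ∃ M, ∀ x : V → E, (∀ i j, G.Adj i j → x i ≠ x j) →
      (∀ i, ∑ j, edgeTension G f x i j • (x j - x i) = 0) →
      ∀ i j, G.Adj i j → ε ≤ ‖x i - x j‖ ∧ ‖x i - x j‖ ≤ M := by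
  obtain ⟨C, hC⟩ := exists_forall_edgeTension_mul_norm_sub_le (E := E) hsym hU
  obtain ⟨D, hD0, hD⟩ := exists_forall_norm_sub_le_of_edgeTension_neg (E := E) hU
  set m := (Fintype.card (V × V) : ℝ)
  obtain ⟨ε, hε, hε_pos⟩ := ((G.eventually_forall_adj fun i j hij =>
    (hU i j hij).eventually_le_of_le_mul (-(m * C))).and self_mem_nhdsWithin).exists
  obtain ⟨M, hM⟩ := (G.eventually_forall_adj fun i j hij =>
    (hU i j hij).eventually_le_of_mul_mul_le (m * (m * C * D))).exists
  refine ⟨ε, hε_pos, M, fun x hinj hx i j hij => ?_⟩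
  have hr : 0 < ‖x i - x j‖ := norm_pos_iff.2 (sub_ne_zero.2 (hinj i j hij))
  have hlow := neg_card_mul_le_mul_norm_sub (edgeTension_comm hsym x) hx (hC x hinj hx)
  have hup := mul_norm_sub_sq_le (edgeTension_comm hsym x) hx hlow (hD x) hD0 i j
  specialize hlow i j
  simp only [edgeTension, if_pos hij] at hlow hup
  exact ⟨hε i j hij _ hr (by linarith), hM i j hij _ hr (by linarith)⟩

end Formation

theorem SimpleGraph.Walk.norm_sub_le_length_mul {V E : Type*} [SeminormedAddCommGroup E]
    {G : SimpleGraph V} {x : V → E} {M : ℝ} (hM : ∀ i j, G.Adj i j → ‖x i - x j‖ ≤ M)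
    {u v : V} (w : G.Walk u v) : ‖x u - x v‖ ≤ w.length * M := by
  induction w with
  | nil => simp
  | cons h w ih =>
    rw [SimpleGraph.Walk.length_cons, Nat.cast_succ, add_mul, one_mul, add_comm]
    exact (norm_sub_le_norm_sub_add_norm_sub _ _ _).trans (add_le_add (hM _ _ h) ih)

theorem SimpleGraph.Connected.exists_forall_norm_le {V E : Type*} [Fintype V]
    [NormedAddCommGroup E] [NormedSpace ℝ E] {G : SimpleGraph V} (hG : G.Connected) (M : ℝ) :
    ∃ R, ∀ x : V → E, (∀ i j, G.Adj i j → ‖x i - x j‖ ≤ M) → ∑ i, x i = 0 →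
      ∀ i, ‖x i‖ ≤ R := by
  let w i j : G.Walk i j := (hG.preconnected i j).some
  refine ⟨∑ i, ∑ j, (w i j).length * M, fun x hM hsum i => ?_⟩
  have hcard : (1 : ℝ) ≤ Fintype.card V := by exact_mod_cast Fintype.card_pos_iff.2 ⟨i⟩
  calc ‖x i‖ ≤ Fintype.card V * ‖x i‖ := le_mul_of_one_le_left (norm_nonneg _) hcard
    _ = ‖∑ j, (x i - x j)‖ := by
      rw [Finset.sum_sub_distrib, hsum, sub_zero, Finset.sum_const, Finset.card_univ,
        RCLike.norm_nsmul ℝ, nsmul_eq_mul]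
    _ ≤ ∑ j, ‖x i - x j‖ := norm_sum_le _ _
    _ ≤ ∑ i, ∑ j, ‖x i - x j‖ :=
      Finset.single_le_sum (f := fun i => ∑ j, ‖x i - x j‖) (fun _ _ => by positivity)
        (Finset.mem_univ i)
    _ ≤ ∑ i, ∑ j, (w i j).length * M := by
      gcongr with i _ j _
      exact (w i j).norm_sub_le_length_mul hM

theorem PiLp.isBounded_setOf_forall_norm_le {ι : Type*} [Fintype ι] {β : ι → Type*}
    [∀ i, SeminormedAddCommGroup (β i)] (p : ENNReal) [Fact (1 ≤ p)] (R : ℝ) :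
    IsBounded {x : PiLp p β | ∀ i, ‖x i‖ ≤ R} := by
  refine ((PiLp.antilipschitzWith_ofLp p β).isBounded_preimage
    (Metric.isBounded_closedBall (x := 0) (r := max R 0))).subset fun x hx => ?_
  rw [mem_preimage, mem_closedBall_zero_iff, pi_norm_le_iff_of_nonneg (le_max_right R 0)]
  exact fun i => (hx i).trans (le_max_left R 0)

theorem continuousOn_formationField {N : ℕ} {G : SimpleGraph (Fin N)}
    {f : Fin N → Fin N → ℝ → ℝ} (hf : ∀ i j, G.Adj i j → ContinuousOn (f i j) (Ioi 0)) :
    ContinuousOn (formationField G.Adj f) (ConfigSpace G) := by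
  refine (PiLp.continuous_toLp 2 _).comp_continuousOn (continuousOn_pi.2 fun i =>
    continuousOn_finsetSum _ fun j _ => ?_)
  by_cases hij : G.Adj i j
  · simp only [if_pos hij]
    refine ContinuousOn.smul ((hf i j hij).comp (by fun_prop) fun p hp => ?_) (by fun_prop)
    exact norm_pos_iff.2 (sub_ne_zero.2 (hp i j hij))
  · simp only [if_neg hij]
    exact continuousOn_const

theorem isClosed_setOf_formationField_eq_zero {N : ℕ} {G : SimpleGraph (Fin N)}
    {f : Fin N → Fin N → ℝ → ℝ} (hf : ∀ i j, G.Adj i j → ContinuousOn (f i j) (Ioi 0))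
    {ε : ℝ} (hε : 0 < ε) (hsep : ∀ p ∈ ConfigSpace G, formationField G.Adj f p = 0 →
      ∀ i j, G.Adj i j → ε ≤ ‖p i - p j‖) :
    IsClosed {p : Config (Fin N) | p ∈ ConfigSpace G ∧ formationField G.Adj f p = 0 ∧
      ∑ i, p i = 0} := by
  set K := {p : Config (Fin N) | ∀ i j, G.Adj i j → ε ≤ ‖p i - p j‖}
  have hK : IsClosed K := by
    simp only [K, ofPred_forall]
    exact isClosed_iInter fun i => isClosed_iInter fun j => isClosed_iInter fun _ =>
      isClosed_le continuous_const (by fun_prop)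
  have hKsub : K ⊆ ConfigSpace G := fun p hp i j hij hpij => by
    have := hp i j hij
    rw [hpij, sub_self, norm_zero] at this
    linarith
  have hZ : IsClosed {p : Config (Fin N) | ∑ i, p i = 0} := isClosed_eq (by fun_prop) (by fun_prop)
  have heq : {p : Config (Fin N) | p ∈ ConfigSpace G ∧ formationField G.Adj f p = 0 ∧
      ∑ i, p i = 0} = (K ∩ {p | ∑ i, p i = 0}) ∩ formationField G.Adj f ⁻¹' {0} := by
    ext p
    exact ⟨fun ⟨hp, hF, hs⟩ => ⟨⟨hsep p hp hF, hs⟩, hF⟩,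
      fun ⟨⟨hp, hs⟩, hF⟩ => ⟨hKsub hp, hF, hs⟩⟩
  rw [heq]
  exact ((continuousOn_formationField hf).mono (inter_subset_left.trans hKsub)
    ).preimage_isClosed_of_isClosed (hK.inter hZ) isClosed_singleton

theorem stmt_5 {N : ℕ} (G : SimpleGraph (Fin N)) (hconn : G.Connected)
    (f : Fin N → Fin N → ℝ → ℝ) (hsym : ∀ i j, f i j = f j i)
    (hU : ∀ i j, G.Adj i j → MemU (f i j)) :
    IsCompact {p : Config (Fin N) | p ∈ ConfigSpace G ∧ formationField G.Adj f p = 0 ∧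
      ∑ i, p i = 0} ∧
    Bornology.IsBounded {p : Config (Fin N) | p ∈ ConfigSpace G ∧
      formationField G.Adj f p = 0 ∧ ∑ i, p i = 0} ∧
    ∃ ε > (0:ℝ), ∀ p : Config (Fin N),
      p ∈ ConfigSpace G → formationField G.Adj f p = 0 → ∑ i, p i = 0 →
      ∀ i j, G.Adj i j → ε ≤ dist (p i) (p j) := by
  obtain ⟨ε, hε, M, hbounds⟩ := exists_edge_length_bounds (E := Plane) hsym hU
  have hedge : ∀ p ∈ ConfigSpace G, formationField G.Adj f p = 0 →
      ∀ i j, G.Adj i j → ε ≤ ‖p i - p j‖ ∧ ‖p i - p j‖ ≤ M :=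
    fun p hp hF => hbounds p.ofLp hp (formationField_eq_zero_iff.1 hF)
  obtain ⟨R, hR⟩ := hconn.exists_forall_norm_le (E := Plane) M
  have hbdd : IsBounded {p : Config (Fin N) | p ∈ ConfigSpace G ∧
      formationField G.Adj f p = 0 ∧ ∑ i, p i = 0} :=
    (PiLp.isBounded_setOf_forall_norm_le 2 R).subset fun p ⟨hp, hF, hs⟩ =>
      hR p.ofLp (fun i j hij => (hedge p hp hF i j hij).2) hs
  have hclosed := isClosed_setOf_formationField_eq_zero
    (fun i j hij => (hU i j hij).1.continuousOn) hε fun p hp hF i j hij => (hedge p hp hF i j hij).1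
  refine ⟨Metric.isCompact_of_isClosed_isBounded hclosed hbdd, hbdd, ε, hε,
    fun p hp hF _ i j hij => ?_⟩
  rw [dist_eq_norm]
  exact (hedge p hp hF i j hij).1

end
end

section
/- Let G be a triangulated Laman graph and p ∈ P_G. Then there exists a line-Laman partition of E (the 'independent partition' of (G,p)) that is coarsest among all line-Laman partitions: every line-Laman partition of E is a refinement of it (i.e., each of its parts is contained in some part of the independent partition). Moreover this coarsest line-Laman partition is unique. -/
open scoped BigOperators
open scoped Classical

noncomputable section

/-!
A triangulated Laman graph is Laman-sparse: every nonempty edge set `B` satisfies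
`|B| + 3 ≤ 2 |V(B)|`, and its tight edge sets (those with equality) are exactly the ones spanning
a triangulated Laman subgraph, as both are built by the same vertex additions. Sparsity of the
intersection and submodularity of the count make the union of two tight sets sharing an edge
tight, and two collinear point sets sharing two distinct points have a collinear union; as `p`
separates adjacent vertices, the admissible parts of a line-Laman partition are closed under
unions through a common edge. So the union of all parts through an edge `e` is again a part, these
maximal parts form a line-Laman partition that every other one refines, and two partitions
refining each other coincide.
-/

open Finset

section VertexSet

variable {n m : ℕ}

lemma mem_vertexSet {B : Finset (Sym2 (Fin n))} {v : Fin n} :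
    v ∈ vertexSet B ↔ ∃ e ∈ B, v ∈ e := by
  simp [vertexSet]

lemma mem_vertexSet_of_mem {B : Finset (Sym2 (Fin n))} {e : Sym2 (Fin n)} {v : Fin n}
    (he : e ∈ B) (hv : v ∈ e) : v ∈ vertexSet B :=
  mem_vertexSet.2 ⟨e, he, hv⟩

@[simp]
lemma vertexSet_empty : vertexSet (∅ : Finset (Sym2 (Fin n))) = ∅ := by
  ext v
  simp [mem_vertexSet]

lemma vertexSet_mono {B C : Finset (Sym2 (Fin n))} (h : B ⊆ C) :
    vertexSet B ⊆ vertexSet C := by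
  intro v hv
  obtain ⟨e, he, hve⟩ := mem_vertexSet.1 hv
  exact mem_vertexSet_of_mem (h he) hve

lemma vertexSet_union (B C : Finset (Sym2 (Fin n))) :
    vertexSet (B ∪ C) = vertexSet B ∪ vertexSet C := by
  ext v
  simp only [mem_vertexSet, mem_union]
  constructor
  · rintro ⟨e, he | he, hv⟩
    exacts [.inl ⟨e, he, hv⟩, .inr ⟨e, he, hv⟩]
  · rintro (⟨e, he, hv⟩ | ⟨e, he, hv⟩)
    exacts [⟨e, .inl he, hv⟩, ⟨e, .inr he, hv⟩]

lemma vertexSet_insert (a b : Fin n) (B : Finset (Sym2 (Fin n))) :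
    vertexSet (insert s(a, b) B) = insert a (insert b (vertexSet B)) := by
  ext v
  simp only [mem_vertexSet, mem_insert, exists_eq_or_imp, Sym2.mem_iff, or_assoc]

lemma vertexSet_singleton (a b : Fin n) : vertexSet {s(a, b)} = {a, b} := by
  rw [← insert_empty, vertexSet_insert, vertexSet_empty, insert_empty]

lemma vertexSet_image {f : Fin n → Fin m} (B : Finset (Sym2 (Fin n))) :
    vertexSet (B.image (Sym2.map f)) = (vertexSet B).image f := by
  ext v
  simp only [mem_vertexSet, mem_image, exists_exists_and_eq_and, Sym2.mem_map]
  aesop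

end VertexSet

/-- The Laman count `|B| = 2 |V(B)| - 3`, written without truncated subtraction. -/
def IsLamanTight {n : ℕ} (B : Finset (Sym2 (Fin n))) : Prop :=
  #B + 3 = 2 * #(vertexSet B)

section Counting

variable {n m : ℕ}

lemma isLamanTight_singleton {a b : Fin n} (h : a ≠ b) : IsLamanTight {s(a, b)} := by
  rw [IsLamanTight, vertexSet_singleton, card_singleton, card_pair h]

lemma IsLamanTight.nonempty {B : Finset (Sym2 (Fin n))} (h : IsLamanTight B) : B.Nonempty := by
  rw [nonempty_iff_ne_empty]
  rintro rfl
  simp [IsLamanTight] at h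

lemma isLamanTight_image_iff {f : Fin n → Fin m} (hf : Function.Injective f)
    (B : Finset (Sym2 (Fin n))) : IsLamanTight (B.image (Sym2.map f)) ↔ IsLamanTight B := by
  rw [IsLamanTight, IsLamanTight, vertexSet_image, card_image_of_injective _ hf,
    card_image_of_injective _ (Sym2.map.injective hf)]

lemma card_add_three_le_image {f : Fin n → Fin m} (hf : Function.Injective f)
    {B : Finset (Sym2 (Fin n))} (h : #B + 3 ≤ 2 * #(vertexSet B)) :
    #(B.image (Sym2.map f)) + 3 ≤ 2 * #(vertexSet (B.image (Sym2.map f))) := by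
  rwa [vertexSet_image, card_image_of_injective _ hf,
    card_image_of_injective _ (Sym2.map.injective hf)]

lemma card_add_three_le_insert_pendant {A : Finset (Sym2 (Fin n))} {x v : Fin n}
    (hv : v ∉ vertexSet A) (hxv : x ≠ v) (hA : A.Nonempty → #A + 3 ≤ 2 * #(vertexSet A)) :
    #(insert s(x, v) A) + 3 ≤ 2 * #(vertexSet (insert s(x, v) A)) ∧
      (IsLamanTight (insert s(x, v) A) → A = ∅) := by
  have hnew : s(x, v) ∉ A := fun h ↦ hv (mem_vertexSet_of_mem h (Sym2.mem_mk_right x v))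
  have hV : #(vertexSet A) + 1 ≤ #(vertexSet (insert s(x, v) A)) := by
    rw [← card_insert_of_notMem hv, vertexSet_insert, Finset.insert_comm]
    exact card_le_card (insert_subset_insert _ (subset_insert _ _))
  have hV2 : 2 ≤ #(vertexSet (insert s(x, v) A)) := by
    rw [vertexSet_insert, ← card_pair hxv]
    exact card_le_card (insert_subset_insert _ (insert_subset_insert _ (empty_subset _)))
  rw [IsLamanTight, card_insert_of_notMem hnew]
  rcases A.eq_empty_or_nonempty with rfl | hne
  · exact ⟨by simp only [card_empty] at hV2 ⊢; omega, fun _ ↦ rfl⟩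
  · have := hA hne
    constructor <;> omega

lemma card_add_three_le_insert_cone {A : Finset (Sym2 (Fin n))} {x y v : Fin n}
    (hv : v ∉ vertexSet A) (hxv : x ≠ v) (hyv : y ≠ v) (hxy : x ≠ y)
    (hA : A.Nonempty → #A + 3 ≤ 2 * #(vertexSet A)) :
    #(insert s(x, v) (insert s(y, v) A)) + 3 ≤
        2 * #(vertexSet (insert s(x, v) (insert s(y, v) A))) ∧
      (IsLamanTight (insert s(x, v) (insert s(y, v) A)) →
        IsLamanTight A ∧ x ∈ vertexSet A ∧ y ∈ vertexSet A) := by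
  set W := insert x (insert y (vertexSet A))
  have hvW : v ∉ W := by simp [W, hxv.symm, hyv.symm, hv]
  have hV : vertexSet (insert s(x, v) (insert s(y, v) A)) = insert v W := by
    simp only [vertexSet_insert, W]
    ext; simp only [mem_insert]; tauto
  have hnew (z : Fin n) : s(z, v) ∉ A := fun h ↦ hv (mem_vertexSet_of_mem h (Sym2.mem_mk_right z v))
  have hxnew : s(x, v) ∉ insert s(y, v) A := by simp [hxy, hxv, hnew]
  have hAW : vertexSet A ⊆ W := (subset_insert _ _).trans (subset_insert _ _)
  have hW : #(vertexSet A) ≤ #W := card_le_card hAW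
  have hW2 : 2 ≤ #W := by
    rw [← card_pair hxy]
    exact card_le_card (insert_subset_insert _ (insert_subset_insert _ (empty_subset _)))
  rw [IsLamanTight, IsLamanTight, hV, card_insert_of_notMem hvW, card_insert_of_notMem hxnew,
    card_insert_of_notMem (hnew y)]
  rcases A.eq_empty_or_nonempty with rfl | hne
  · simp only [card_empty, vertexSet_empty] at hW2 ⊢
    omega
  · have := hA hne
    refine ⟨by omega, fun ht ↦ ?_⟩
    have hWA : vertexSet A = W := eq_of_subset_of_card_le hAW (by omega)
    refine ⟨by omega, ?_, ?_⟩ <;> rw [hWA] <;> simp [W]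

lemma IsLamanTight.mem_of_card_add_three_le_insert {A : Finset (Sym2 (Fin n))} {x y : Fin n}
    (hA : IsLamanTight A) (hx : x ∈ vertexSet A) (hy : y ∈ vertexSet A)
    (h : #(insert s(x, y) A) + 3 ≤ 2 * #(vertexSet (insert s(x, y) A))) : s(x, y) ∈ A := by
  by_contra hxy
  rw [vertexSet_insert, insert_eq_of_mem hy, insert_eq_of_mem hx,
    card_insert_of_notMem hxy] at h
  rw [IsLamanTight] at hA
  omega

end Counting

lemma edgeSet_top_fin_two : (⊤ : SimpleGraph (Fin 2)).edgeSet = {s(0, 1)} := by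
  ext e
  induction e using Sym2.ind with
  | _ x y => fin_cases x <;> fin_cases y <;> simp [Sym2.eq_swap]

lemma last_notMem_map_castSucc {n : ℕ} (e : Sym2 (Fin n)) :
    Fin.last n ∉ Sym2.map Fin.castSucc e := by
  simp [Sym2.mem_map, Fin.castSucc_ne_last]

lemma mk_castSucc_mem_image_map_castSucc {n : ℕ} {S : Set (Sym2 (Fin n))} {a b : Fin n} :
    s(a.castSucc, b.castSucc) ∈ Sym2.map Fin.castSucc '' S ↔ s(a, b) ∈ S := by
  rw [← Sym2.map_mk, (Sym2.map.injective (Fin.castSucc_injective n)).mem_set_image]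

lemma mk_last_notMem_image_map_castSucc {n : ℕ} (S : Set (Sym2 (Fin n))) (x : Fin (n + 1)) :
    s(x, Fin.last n) ∉ Sym2.map Fin.castSucc '' S := by
  rintro ⟨e, -, he⟩
  exact last_notMem_map_castSucc e (he ▸ Sym2.mem_mk_right x _)

section Grow

variable {n : ℕ} {G' : SimpleGraph (Fin (n + 2))} {G : SimpleGraph (Fin (n + 3))}
  {j k : Fin (n + 2)}

lemma edgeSet_eq_of_grow
    (h1 : ∀ a b : Fin (n + 2), G.Adj a.castSucc b.castSucc ↔ G'.Adj a b)
    (h2 : ∀ a : Fin (n + 2), G.Adj a.castSucc (Fin.last (n + 2)) ↔ a = j ∨ a = k) :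
    G.edgeSet = Sym2.map Fin.castSucc '' G'.edgeSet ∪
      {s(j.castSucc, Fin.last (n + 2)), s(k.castSucc, Fin.last (n + 2))} := by
  ext e
  induction e using Sym2.ind with
  | _ x y =>
    induction x using Fin.lastCases <;> induction y using Fin.lastCases <;>
      simp only [Set.mem_union, SimpleGraph.mem_edgeSet, mk_castSucc_mem_image_map_castSucc,
        mk_last_notMem_image_map_castSucc, Sym2.eq_swap (a := Fin.last _)] <;>
      simp [h1, h2, Fin.castSucc_ne_last, (Fin.castSucc_ne_last _).symm]

lemma exists_eq_of_subset_edgeSet_grow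
    (h1 : ∀ a b : Fin (n + 2), G.Adj a.castSucc b.castSucc ↔ G'.Adj a b)
    (h2 : ∀ a : Fin (n + 2), G.Adj a.castSucc (Fin.last (n + 2)) ↔ a = j ∨ a = k)
    {B : Finset (Sym2 (Fin (n + 3)))} (hB : ↑B ⊆ G.edgeSet) :
    ∃ B' : Finset (Sym2 (Fin (n + 2))), ↑B' ⊆ G'.edgeSet ∧
      (B = B'.image (Sym2.map Fin.castSucc) ∨
        B = insert s(j.castSucc, Fin.last _) (B'.image (Sym2.map Fin.castSucc)) ∨
        B = insert s(k.castSucc, Fin.last _) (B'.image (Sym2.map Fin.castSucc)) ∨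
        B = insert s(j.castSucc, Fin.last _) (insert s(k.castSucc, Fin.last _)
          (B'.image (Sym2.map Fin.castSucc)))) := by
  have hE := edgeSet_eq_of_grow h1 h2
  have hcases {e} (he : e ∈ B) : e ∈ Sym2.map Fin.castSucc '' G'.edgeSet ∧ Fin.last _ ∉ e ∨
      e = s(j.castSucc, Fin.last _) ∨ e = s(k.castSucc, Fin.last _) := by
    have := hB he
    rw [hE] at this
    rcases this with ⟨e', he', rfl⟩ | h | h
    exacts [.inl ⟨⟨e', he', rfl⟩, last_notMem_map_castSucc e'⟩, .inr (.inl h), .inr (.inr h)]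
  have hfar : ↑(B.filter (Fin.last _ ∉ ·)) ⊆ Sym2.map Fin.castSucc '' G'.edgeSet := by
    intro e he
    simp only [coe_filter] at he
    rcases hcases he.1 with h | rfl | rfl
    exacts [h.1, absurd (Sym2.mem_mk_right _ _) he.2, absurd (Sym2.mem_mk_right _ _) he.2]
  obtain ⟨B', hB', hB'B⟩ := Finset.subset_set_image_iff.1 hfar
  have hmem (e) : e ∈ B ↔ e ∈ B'.image (Sym2.map Fin.castSucc) ∨
      (e = s(j.castSucc, Fin.last _) ∧ e ∈ B) ∨ (e = s(k.castSucc, Fin.last _) ∧ e ∈ B) := by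
    rw [hB'B, mem_filter]
    constructor
    · intro he
      rcases hcases he with h | rfl | rfl <;> tauto
    · tauto
  refine ⟨B', hB', ?_⟩
  by_cases hj : s(j.castSucc, Fin.last _) ∈ B <;> by_cases hk : s(k.castSucc, Fin.last _) ∈ B
  · refine .inr (.inr (.inr ?_))
    ext e; rw [hmem e]; simp only [mem_insert]; grind
  · refine .inr (.inl ?_)
    ext e; rw [hmem e]; simp only [mem_insert]; grind
  · refine .inr (.inr (.inl ?_))
    ext e; rw [hmem e]; simp only [mem_insert]; grind
  · refine .inl ?_
    ext e; rw [hmem e]; grind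

end Grow

lemma last_notMem_vertexSet_image_map_castSucc {n : ℕ} (B : Finset (Sym2 (Fin n))) :
    Fin.last n ∉ vertexSet (B.image (Sym2.map Fin.castSucc)) := by
  simp [vertexSet_image, Fin.castSucc_ne_last]

theorem IsTriangulatedLaman.card_add_three_le {n : ℕ} {G : SimpleGraph (Fin n)}
    (hG : IsTriangulatedLaman G) {B : Finset (Sym2 (Fin n))} (hB : ↑B ⊆ G.edgeSet)
    (hne : B.Nonempty) : #B + 3 ≤ 2 * #(vertexSet B) := by
  induction hG with
  | base =>
    rw [edgeSet_top_fin_two, coe_subset_singleton, hne.subset_singleton_iff] at hB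
    exact hB ▸ (isLamanTight_singleton (by decide)).le
  | @grow n G' G j k hG' hjk h1 h2 IH =>
    obtain ⟨B', hB', hcases⟩ := exists_eq_of_subset_edgeSet_grow h1 h2 hB
    have hA (h : (B'.image (Sym2.map Fin.castSucc)).Nonempty) :=
      card_add_three_le_image (Fin.castSucc_injective _) (IH hB' (image_nonempty.1 h))
    have hL := last_notMem_vertexSet_image_map_castSucc B'
    have hjL := Fin.castSucc_ne_last j
    have hkL := Fin.castSucc_ne_last k
    rcases hcases with rfl | rfl | rfl | rfl
    · exact hA hne
    · exact (card_add_three_le_insert_pendant hL hjL hA).1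
    · exact (card_add_three_le_insert_pendant hL hkL hA).1
    · exact (card_add_three_le_insert_cone hL hjL hkL
        ((Fin.castSucc_injective _).ne hjk.ne) hA).1

inductive IsTriangulatedLamanEdgeSet {n : ℕ} : Finset (Sym2 (Fin n)) → Prop
  | single {a b : Fin n} (hab : a ≠ b) : IsTriangulatedLamanEdgeSet {s(a, b)}
  | grow {B : Finset (Sym2 (Fin n))} {a b v : Fin n} (hab : a ≠ b) (h : s(a, b) ∈ B)
      (hv : v ∉ vertexSet B) (hB : IsTriangulatedLamanEdgeSet B) :
      IsTriangulatedLamanEdgeSet (insert s(a, v) (insert s(b, v) B))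

lemma IsTriangulatedLamanEdgeSet.image {n m : ℕ} {f : Fin n → Fin m} (hf : Function.Injective f)
    {B : Finset (Sym2 (Fin n))} (h : IsTriangulatedLamanEdgeSet B) :
    IsTriangulatedLamanEdgeSet (B.image (Sym2.map f)) := by
  induction h with
  | single hab =>
    rw [image_singleton, Sym2.map_mk]
    exact .single (hf.ne hab)
  | grow hab h hv _ ih =>
    rw [image_insert, image_insert, Sym2.map_mk, Sym2.map_mk]
    refine .grow (hf.ne hab) (Sym2.map_mk f _ _ ▸ mem_image_of_mem _ h) ?_ ih
    rwa [vertexSet_image, hf.mem_finset_image]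

theorem IsTriangulatedLaman.isTriangulatedLamanEdgeSet {n : ℕ} {G : SimpleGraph (Fin n)}
    (hG : IsTriangulatedLaman G) {B : Finset (Sym2 (Fin n))} (hB : ↑B ⊆ G.edgeSet)
    (ht : IsLamanTight B) : IsTriangulatedLamanEdgeSet B := by
  induction hG with
  | base =>
    rw [edgeSet_top_fin_two, coe_subset_singleton, ht.nonempty.subset_singleton_iff] at hB
    exact hB ▸ .single (by decide)
  | @grow n G' G j k hG' hjk h1 h2 IH =>
    obtain ⟨B', hB', hcases⟩ := exists_eq_of_subset_edgeSet_grow h1 h2 hB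
    have hA (h : (B'.image (Sym2.map Fin.castSucc)).Nonempty) :=
      card_add_three_le_image (Fin.castSucc_injective _)
        (hG'.card_add_three_le hB' (image_nonempty.1 h))
    have hTL (h : IsLamanTight (B'.image (Sym2.map Fin.castSucc))) :=
      (IH hB' ((isLamanTight_image_iff (Fin.castSucc_injective _) B').1 h)).image
        (Fin.castSucc_injective _)
    have hL := last_notMem_vertexSet_image_map_castSucc B'
    have hjL := Fin.castSucc_ne_last j
    have hkL := Fin.castSucc_ne_last k
    have hjk' : j.castSucc ≠ k.castSucc := (Fin.castSucc_injective _).ne hjk.ne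
    rcases hcases with rfl | rfl | rfl | rfl
    · exact hTL ht
    · rw [(card_add_three_le_insert_pendant hL hjL hA).2 ht]
      exact .single hjL
    · rw [(card_add_three_le_insert_pendant hL hkL hA).2 ht]
      exact .single hkL
    · obtain ⟨hAt, hjA, hkA⟩ := (card_add_three_le_insert_cone hL hjL hkL hjk' hA).2 ht
      refine .grow hjk' (hAt.mem_of_card_add_three_le_insert hjA hkA ?_) hL (hTL hAt)
      refine (IsTriangulatedLaman.grow G' G j k hG' hjk h1 h2).card_add_three_le ?_
        (insert_nonempty _ _)
      rw [coe_insert, Set.insert_subset_iff]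
      exact ⟨(h1 j k).2 hjk, fun _ he ↦ hB (mem_insert_of_mem (mem_insert_of_mem he))⟩

def IsTriangulatedLamanUpToIso {V : Type*} (Γ : SimpleGraph V) : Prop :=
  ∃ (M : ℕ) (H : SimpleGraph (Fin M)), IsTriangulatedLaman H ∧ Nonempty (Γ ≃g H)

lemma IsTriangulatedLaman.exists_eq_add_two {M : ℕ} {H : SimpleGraph (Fin M)}
    (hH : IsTriangulatedLaman H) : ∃ K, M = K + 2 := by
  cases hH
  exacts [⟨0, rfl⟩, ⟨_, rfl⟩]

lemma isTriangulatedLamanUpToIso_top {V : Type*} [Fintype V] (hV : Fintype.card V = 2) :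
    IsTriangulatedLamanUpToIso (⊤ : SimpleGraph V) :=
  ⟨2, ⊤, .base, ⟨.completeGraph (Fintype.equivFinOfCardEq hV)⟩⟩

lemma IsTriangulatedLamanUpToIso.of_cone {V W : Type*} [DecidableEq V] {Γ : SimpleGraph V}
    {Γ₀ : SimpleGraph W} (h₀ : IsTriangulatedLamanUpToIso Γ₀) {v : V} (f : W ≃ {x // x ≠ v})
    {a b : W} (hab : Γ₀.Adj a b) (hf : ∀ x y, Γ.Adj (f x) (f y) ↔ Γ₀.Adj x y)
    (hv : ∀ x, Γ.Adj (f x) v ↔ x = a ∨ x = b) : IsTriangulatedLamanUpToIso Γ := by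
  obtain ⟨M, H, hH, ⟨ψ⟩⟩ := h₀
  obtain ⟨K, rfl⟩ := hH.exists_eq_add_two
  -- relabel `V` by `Fin (K + 3)`, with `v` last and the rest ordered by `ψ`: then the image of
  -- `Γ` is literally `H` grown by a vertex on the edge `ψ a ψ b`
  let e : V ≃ Fin (K + 3) := (Equiv.optionSubtypeNe v).symm.trans
    ((f.symm.trans ψ.toEquiv).optionCongr.trans finSuccEquivLast.symm)
  have he_v : e v = Fin.last _ := by
    simp only [e, Equiv.trans_apply, Equiv.optionSubtypeNe_symm_self, Equiv.optionCongr_apply,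
      Option.map_none, finSuccEquivLast_symm_none]
  have he_f (x : W) : e (f x) = (ψ x).castSucc := by
    simp only [e, Equiv.trans_apply, Equiv.optionSubtypeNe_symm_of_ne (f x).2,
      Equiv.optionCongr_apply, Option.map_some, finSuccEquivLast_symm_some, Subtype.coe_eta,
      Equiv.symm_apply_apply]
    rfl
  have hmap (x y : V) : (Γ.map e.toEmbedding).Adj (e x) (e y) ↔ Γ.Adj x y :=
    SimpleGraph.map_adj_apply
  refine ⟨K + 3, Γ.map e.toEmbedding,
    .grow H _ (ψ a) (ψ b) hH (ψ.map_rel_iff.2 hab) (fun x y ↦ ?_) (fun x ↦ ?_), ⟨.map e Γ⟩⟩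
  · rw [← ψ.apply_symm_apply x, ← ψ.apply_symm_apply y, ← he_f, ← he_f, hmap, hf, ψ.map_rel_iff]
  · rw [← ψ.apply_symm_apply x, ← he_f, ← he_v, hmap, hv, ψ.apply_eq_iff_eq, ψ.apply_eq_iff_eq]

lemma inducedSubgraph_adj {n : ℕ} {B : Finset (Sym2 (Fin n))} {x y : vertexSet B} :
    (inducedSubgraph B).Adj x y ↔ s(x.1, y.1) ∈ B ∧ x ≠ y := by
  rw [inducedSubgraph, SimpleGraph.fromEdgeSet_adj]
  rfl

lemma inducedSubgraph_singleton {n : ℕ} {a b : Fin n} : inducedSubgraph {s(a, b)} = ⊤ := by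
  ext x y
  have hx := x.2
  have hy := y.2
  simp only [vertexSet_singleton, mem_insert, mem_singleton] at hx hy
  rw [inducedSubgraph_adj, SimpleGraph.top_adj, mem_singleton, Ne, Subtype.ext_iff]
  rcases hx with hx | hx <;> rcases hy with hy | hy <;> simp [hx, hy, Sym2.eq_swap]

lemma IsTriangulatedLamanEdgeSet.inducedTLaman {n : ℕ} {B : Finset (Sym2 (Fin n))}
    (h : IsTriangulatedLamanEdgeSet B) : InducedTLaman B := by
  induction h with
  | @single a b hab =>
    rw [InducedTLaman, inducedSubgraph_singleton]
    exact isTriangulatedLamanUpToIso_top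
      (by rw [Fintype.card_coe, vertexSet_singleton, card_pair hab])
  | @grow B a b v hab hB hv _ ih =>
    have ha : a ∈ vertexSet B := mem_vertexSet_of_mem hB (Sym2.mem_mk_left a b)
    have hb : b ∈ vertexSet B := mem_vertexSet_of_mem hB (Sym2.mem_mk_right a b)
    have hvB (x : Fin n) : s(x, v) ∉ B :=
      fun h ↦ hv (mem_vertexSet_of_mem h (Sym2.mem_mk_right x v))
    set C := insert s(a, v) (insert s(b, v) B)
    have hVC : vertexSet C = insert v (vertexSet B) := by
      rw [vertexSet_insert, vertexSet_insert, insert_eq_of_mem (mem_insert_of_mem hb),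
        insert_idem, insert_eq_of_mem (mem_insert_of_mem ha)]
    have hvC : v ∈ vertexSet C := hVC ▸ mem_insert_self v _
    have hne (x : vertexSet B) : x.1 ≠ v := fun h ↦ hv (h ▸ x.2)
    let f : vertexSet B ≃ {x : vertexSet C // x ≠ ⟨v, hvC⟩} :=
      { toFun x := ⟨⟨x, hVC ▸ mem_insert_of_mem x.2⟩, fun h ↦ hne x (congrArg Subtype.val h)⟩
        invFun x := ⟨x.1, by
          have hx : x.1.1 ∈ insert v (vertexSet B) := hVC ▸ x.1.2
          exact (mem_insert.1 hx).resolve_left fun h ↦ x.2 (Subtype.ext h)⟩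
        left_inv _ := rfl
        right_inv _ := rfl }
    refine IsTriangulatedLamanUpToIso.of_cone ih f (a := ⟨a, ha⟩) (b := ⟨b, hb⟩) ?_
      (fun x y ↦ ?_) (fun x ↦ ?_)
    · exact inducedSubgraph_adj.2 ⟨hB, fun h ↦ hab (congrArg Subtype.val h)⟩
    · rw [inducedSubgraph_adj, inducedSubgraph_adj, Ne, Subtype.val_injective.eq_iff,
        f.injective.eq_iff]
      simp [C, f, hne x, hne y]
    · rw [inducedSubgraph_adj, and_iff_left (f x).2, Subtype.ext_iff, Subtype.ext_iff]
      simp [C, f, hne x, hvB]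

theorem IsTriangulatedLaman.ncard_edgeSet_add_three {M : ℕ} {H : SimpleGraph (Fin M)}
    (hH : IsTriangulatedLaman H) : H.edgeSet.ncard + 3 = 2 * M := by
  induction hH with
  | base => rw [edgeSet_top_fin_two, Set.ncard_singleton]
  | @grow n G' G j k _ hjk h1 h2 IH =>
    have hdisj : Disjoint (Sym2.map Fin.castSucc '' G'.edgeSet)
        {s(j.castSucc, Fin.last (n + 2)), s(k.castSucc, Fin.last (n + 2))} := by
      rw [Set.disjoint_right]
      rintro e (rfl | rfl) <;> exact mk_last_notMem_image_map_castSucc _ _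
    rw [edgeSet_eq_of_grow h1 h2, Set.ncard_union_eq hdisj,
      Set.ncard_image_of_injective _ (Sym2.map.injective (Fin.castSucc_injective _)),
      Set.ncard_pair (by simpa using hjk.ne)]
    omega

lemma ncard_edgeSet_inducedSubgraph {n : ℕ} {B : Finset (Sym2 (Fin n))}
    (hd : ∀ e ∈ B, ¬e.IsDiag) : (inducedSubgraph B).edgeSet.ncard = #B := by
  have hE : (inducedSubgraph B).edgeSet = Sym2.map Subtype.val ⁻¹' ↑B := by
    rw [inducedSubgraph, SimpleGraph.edgeSet_fromEdgeSet]
    refine sdiff_eq_left.2 (Set.disjoint_right.2 fun e hdiag he ↦ ?_)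
    exact hd _ he ((Sym2.isDiag_map Subtype.val_injective).2 hdiag)
  rw [hE, Set.ncard_preimage_of_injective_subset_range (Sym2.map.injective Subtype.val_injective),
    Set.ncard_coe_finset]
  intro e he
  induction e using Sym2.ind with
  | _ x y =>
    exact ⟨s(⟨x, mem_vertexSet_of_mem he (Sym2.mem_mk_left x y)⟩,
      ⟨y, mem_vertexSet_of_mem he (Sym2.mem_mk_right x y)⟩), rfl⟩

lemma InducedTLaman.isLamanTight {n : ℕ} {B : Finset (Sym2 (Fin n))} (h : InducedTLaman B)
    (hd : ∀ e ∈ B, ¬e.IsDiag) : IsLamanTight B := by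
  obtain ⟨M, H, hH, ⟨φ⟩⟩ := h
  have hV : #(vertexSet B) = M := by rw [← Fintype.card_coe, φ.card_eq, Fintype.card_fin]
  have hE : #B = H.edgeSet.ncard := by
    rw [← ncard_edgeSet_inducedSubgraph hd, ← Nat.card_coe_set_eq, ← Nat.card_coe_set_eq,
      Nat.card_congr φ.mapEdgeSet]
  rw [IsLamanTight, hV, hE]
  exact hH.ncard_edgeSet_add_three

theorem IsTriangulatedLaman.inducedTLaman_iff_isLamanTight {n : ℕ} {G : SimpleGraph (Fin n)}
    (hG : IsTriangulatedLaman G) {B : Finset (Sym2 (Fin n))} (hB : ↑B ⊆ G.edgeSet) :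
    InducedTLaman B ↔ IsLamanTight B :=
  ⟨fun h ↦ h.isLamanTight fun _ he ↦ G.not_isDiag_of_mem_edgeSet (hB he),
    fun h ↦ (hG.isTriangulatedLamanEdgeSet hB h).inducedTLaman⟩

/-- Submodularity of the Laman count, with sparsity of the intersection. -/
theorem IsTriangulatedLaman.isLamanTight_union {n : ℕ} {G : SimpleGraph (Fin n)}
    (hG : IsTriangulatedLaman G) {B₁ B₂ : Finset (Sym2 (Fin n))} (h₁ : ↑B₁ ⊆ G.edgeSet)
    (h₂ : ↑B₂ ⊆ G.edgeSet) (t₁ : IsLamanTight B₁) (t₂ : IsLamanTight B₂)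
    (hne : (B₁ ∩ B₂).Nonempty) : IsLamanTight (B₁ ∪ B₂) := by
  have hinter := hG.card_add_three_le (fun e he ↦ h₁ (mem_inter.1 he).1) hne
  have hunion := hG.card_add_three_le (coe_union B₁ B₂ ▸ Set.union_subset h₁ h₂)
    (hne.mono inter_subset_union)
  have hVinter : #(vertexSet (B₁ ∩ B₂)) ≤ #(vertexSet B₁ ∩ vertexSet B₂) :=
    card_le_card (subset_inter (vertexSet_mono inter_subset_left)
      (vertexSet_mono inter_subset_right))
  have := card_union_add_card_inter B₁ B₂
  have := card_union_add_card_inter (vertexSet B₁) (vertexSet B₂)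
  rw [IsLamanTight] at t₁ t₂ ⊢
  rw [vertexSet_union] at hunion ⊢
  omega

lemma Collinear.union {k V P : Type*} [DivisionRing k] [AddCommGroup V] [Module k V]
    [AddTorsor V P] {s t : Set P} {x y : P} (hs : Collinear k s) (ht : Collinear k t)
    (hxs : x ∈ s) (hys : y ∈ s) (hxt : x ∈ t) (hyt : y ∈ t) (hxy : x ≠ y) :
    Collinear k (s ∪ t) := by
  have hline : Collinear k (line[k, x, y] : Set P) := by
    rw [Collinear, ← direction_affineSpan, AffineSubspace.affineSpan_coe, direction_affineSpan]
    exact collinear_pair k x y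
  refine hline.subset (Set.union_subset (fun z hz ↦ ?_) (fun z hz ↦ ?_))
  exacts [hs.mem_affineSpan_of_mem_of_ne hxs hys hz hxy,
    ht.mem_affineSpan_of_mem_of_ne hxt hyt hz hxy]

def IsLineLamanPartOf {n : ℕ} (G : SimpleGraph (Fin n)) (p : Config (Fin n))
    (B : Finset (Sym2 (Fin n))) : Prop :=
  B.Nonempty ∧ ↑B ⊆ G.edgeSet ∧ IsLineLamanPart p B

section LineLamanParts

variable {n : ℕ} {G : SimpleGraph (Fin n)} {p : Config (Fin n)}

lemma isLineLamanPartOf_singleton {e : Sym2 (Fin n)} (he : e ∈ G.edgeSet) :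
    IsLineLamanPartOf G p {e} := by
  induction e using Sym2.ind with
  | _ a b =>
    refine ⟨singleton_nonempty _, by simpa using he, (IsTriangulatedLamanEdgeSet.single
      (G.ne_of_adj he)).inducedTLaman, ?_⟩
    rw [vertexSet_singleton, coe_pair, Set.image_pair]
    exact collinear_pair ℝ _ _

lemma IsLineLamanPartOf.union (hG : IsTriangulatedLaman G) (hp : p ∈ ConfigSpace G)
    {B₁ B₂ : Finset (Sym2 (Fin n))} {e : Sym2 (Fin n)} (h₁ : IsLineLamanPartOf G p B₁)
    (h₂ : IsLineLamanPartOf G p B₂) (he₁ : e ∈ B₁) (he₂ : e ∈ B₂) :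
    IsLineLamanPartOf G p (B₁ ∪ B₂) := by
  obtain ⟨-, hsub₁, hlaman₁, hcol₁⟩ := h₁
  obtain ⟨-, hsub₂, hlaman₂, hcol₂⟩ := h₂
  have hsub : ↑(B₁ ∪ B₂) ⊆ G.edgeSet := coe_union B₁ B₂ ▸ Set.union_subset hsub₁ hsub₂
  refine ⟨⟨e, mem_union_left _ he₁⟩, hsub, ?_, ?_⟩
  · rw [hG.inducedTLaman_iff_isLamanTight hsub]
    rw [hG.inducedTLaman_iff_isLamanTight hsub₁] at hlaman₁
    rw [hG.inducedTLaman_iff_isLamanTight hsub₂] at hlaman₂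
    exact hG.isLamanTight_union hsub₁ hsub₂ hlaman₁ hlaman₂ ⟨e, mem_inter.2 ⟨he₁, he₂⟩⟩
  · rw [vertexSet_union, coe_union, Set.image_union]
    induction e using Sym2.ind with
    | _ a b =>
      have hmem {B : Finset (Sym2 (Fin n))} (he : s(a, b) ∈ B) (v) (hv : v ∈ s(a, b)) :
          p v ∈ p '' (vertexSet B : Set (Fin n)) :=
        Set.mem_image_of_mem p (mem_vertexSet_of_mem he hv)
      exact hcol₁.union hcol₂ (hmem he₁ a (Sym2.mem_mk_left a b))
        (hmem he₁ b (Sym2.mem_mk_right a b)) (hmem he₂ a (Sym2.mem_mk_left a b))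
        (hmem he₂ b (Sym2.mem_mk_right a b)) (hp a b (hsub₁ he₁))

end LineLamanParts

def maxLineLamanPart {n : ℕ} (G : SimpleGraph (Fin n)) (p : Config (Fin n)) (e : Sym2 (Fin n)) :
    Finset (Sym2 (Fin n)) :=
  ({B | IsLineLamanPartOf G p B ∧ e ∈ B} : Finset (Finset (Sym2 (Fin n)))).sup id

section MaxLineLamanPart

variable {n : ℕ} {G : SimpleGraph (Fin n)} {p : Config (Fin n)}

lemma subset_maxLineLamanPart {B : Finset (Sym2 (Fin n))} {e : Sym2 (Fin n)}
    (hB : IsLineLamanPartOf G p B) (he : e ∈ B) : B ⊆ maxLineLamanPart G p e :=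
  le_sup (f := id) (mem_filter.2 ⟨mem_univ _, hB, he⟩)

lemma isLineLamanPartOf_maxLineLamanPart (hG : IsTriangulatedLaman G) (hp : p ∈ ConfigSpace G)
    {e : Sym2 (Fin n)} (he : e ∈ G.edgeSet) :
    IsLineLamanPartOf G p (maxLineLamanPart G p e) ∧ e ∈ maxLineLamanPart G p e := by
  refine SupClosed.finsetSup_mem (s := {B | IsLineLamanPartOf G p B ∧ e ∈ B}) ?_
    ⟨{e}, mem_filter.2 ⟨mem_univ _, isLineLamanPartOf_singleton he, mem_singleton_self e⟩⟩
    (fun B hB ↦ (mem_filter.1 hB).2)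
  exact fun B₁ h₁ B₂ h₂ ↦ ⟨h₁.1.union hG hp h₂.1 h₁.2 h₂.2, mem_union_left _ h₁.2⟩

lemma maxLineLamanPart_eq_of_mem (hG : IsTriangulatedLaman G) (hp : p ∈ ConfigSpace G)
    {e e' : Sym2 (Fin n)} (he : e ∈ G.edgeSet) (he' : e' ∈ maxLineLamanPart G p e) :
    maxLineLamanPart G p e' = maxLineLamanPart G p e := by
  have hmax := isLineLamanPartOf_maxLineLamanPart hG hp he
  have hsub := subset_maxLineLamanPart hmax.1 he'
  have hmax' := isLineLamanPartOf_maxLineLamanPart hG hp (hmax.1.2.1 he')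
  exact (subset_maxLineLamanPart hmax'.1 (hsub hmax.2)).antisymm hsub

theorem isIndependentPartition_image_maxLineLamanPart (hG : IsTriangulatedLaman G)
    (hp : p ∈ ConfigSpace G) :
    IsIndependentPartition G p (G.edgeFinset.image (maxLineLamanPart G p)) := by
  refine ⟨⟨fun B hB ↦ ?_, fun e he ↦ ?_⟩, fun Q hQ B hB ↦ ?_⟩
  · obtain ⟨e, he, rfl⟩ := mem_image.1 hB
    exact (isLineLamanPartOf_maxLineLamanPart hG hp (G.mem_edgeFinset.1 he)).1
  · refine ⟨maxLineLamanPart G p e, ⟨mem_image_of_mem _ (G.mem_edgeFinset.2 he),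
      (isLineLamanPartOf_maxLineLamanPart hG hp he).2⟩, ?_⟩
    rintro _ ⟨hB, heB⟩
    obtain ⟨e', he', rfl⟩ := mem_image.1 hB
    exact (maxLineLamanPart_eq_of_mem hG hp (G.mem_edgeFinset.1 he') heB).symm
  · obtain ⟨⟨e, he⟩, hsub, -⟩ := hQ.1 B hB
    exact ⟨_, mem_image_of_mem _ (G.mem_edgeFinset.2 (hsub he)),
      subset_maxLineLamanPart (hQ.1 B hB) he⟩

end MaxLineLamanPart

lemma IsLineLamanPartition.subset_of_refines {n : ℕ} {G : SimpleGraph (Fin n)}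
    {p : Config (Fin n)} {P Q : Finset (Finset (Sym2 (Fin n)))} (hP : IsLineLamanPartition G p P)
    (hPQ : Refines P Q) (hQP : Refines Q P) : P ⊆ Q := by
  intro B hB
  obtain ⟨C, hC, hBC⟩ := hPQ B hB
  obtain ⟨D, hD, hCD⟩ := hQP C hC
  obtain ⟨⟨e, he⟩, hsub, -⟩ := hP.1 B hB
  obtain ⟨_, -, huniq⟩ := hP.2 e (hsub he)
  have hDB : D = B := (huniq D ⟨hD, hCD (hBC he)⟩).trans (huniq B ⟨hB, he⟩).symm
  rwa [hBC.antisymm (hDB ▸ hCD)]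

open Filter MeasureTheory

theorem stmt_10 {N : ℕ} (G : SimpleGraph (Fin N)) (hG : IsTriangulatedLaman G)
    (p : Config (Fin N)) (hp : p ∈ ConfigSpace G) :
    ∃! P : Finset (Finset (Sym2 (Fin N))), IsIndependentPartition G p P := by
  have hP := isIndependentPartition_image_maxLineLamanPart hG hp
  refine ⟨_, hP, fun Q hQ ↦ ?_⟩
  have hQP := hP.2 Q hQ.1
  have hPQ := hQ.2 _ hP.1
  exact (hQ.1.subset_of_refines hQP hPQ).antisymm (hP.1.subset_of_refines hPQ hQP)

end
end
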